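/- Let a ∈ ℝ, c > 0, ζ > 0, and let Q : [0,T] × ℝ² → S^(2) be a smooth, bounded solution (with bounded first and second spatial derivatives, square-integrable together with Q uniformly in t) of ∂_t Q = ζ ΔQ − a Q − c tr(Q²) Q. If for every x ∈ ℝ² the eigenvalues of Q(0,x) lie in the interval [−√(|a|/(2c)), √(|a|/(2c))], then for every t ∈ [0,T] and every x ∈ ℝ² the eigenvalues of Q(t,x) lie in [−√(|a|/(2c)), √(|a|/(2c))]. -/

import Mathlib

open MeasureTheory Set
open Filter Topology

noncomputable section

/-- The plane `ℝ²`. -/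
abbrev E2 := EuclideanSpace ℝ (Fin 2)

/-- Partial derivative `∂_k f` of a scalar function on `ℝ²`. -/
noncomputable def pd (k : Fin 2) (f : E2 → ℝ) (x : E2) : ℝ :=
  fderiv ℝ f x (EuclideanSpace.single k 1)

/-- Second partial derivative `∂_l ∂_k f`. -/
noncomputable def pd2 (l k : Fin 2) (f : E2 → ℝ) (x : E2) : ℝ :=
  pd l (fun y => pd k f y) x

/-- Frobenius norm `|M| = √(∑ M_{ij}²)` of a real 2×2 matrix. -/
noncomputable def fnorm (M : Matrix (Fin 2) (Fin 2) ℝ) : ℝ :=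
  Real.sqrt (∑ i, ∑ j, (M i j) ^ 2)

lemma trace_eq_sum_eig {M : Matrix (Fin 2) (Fin 2) ℝ} (hM : M.IsHermitian) :
    M.trace = ∑ i, hM.eigenvalues i := by
  simpa using hM.trace_eq_sum_eigenvalues

lemma eig_sq_eq {M : Matrix (Fin 2) (Fin 2) ℝ} (hM : M.IsHermitian) (htr : M.trace = 0)
    (i : Fin 2) : (hM.eigenvalues i)^2 = (∑ i, ∑ j, (M i j)^2) / 2 := by
  have hsym : M 1 0 = M 0 1 := by
    have := hM.apply 1 0; simpa using this.symm
  have h11 : M 1 1 = - M 0 0 := by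
    have := htr; rw [Matrix.trace_fin_two] at this; linarith
  have hs : hM.eigenvalues 0 + hM.eigenvalues 1 = 0 := by
    have := trace_eq_sum_eig hM
    rw [htr] at this
    simpa [Fin.sum_univ_two] using this.symm
  have hp : hM.eigenvalues 0 * hM.eigenvalues 1 = M.det := by
    have := hM.det_eq_prod_eigenvalues
    simpa [Fin.prod_univ_two] using this.symm
  have hd : M.det = M 0 0 * M 1 1 - M 0 1 * M 1 0 := Matrix.det_fin_two M
  have hexp : (∑ i, ∑ j, (M i j)^2) = 2 * (M 0 0)^2 + 2 * (M 0 1)^2 := by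
    simp only [Fin.sum_univ_two, hsym, h11]
    ring
  rw [hexp]
  have hi : i = 0 ∨ i = 1 := by omega
  rcases hi with hi | hi <;> subst hi <;>
    linear_combination hM.eigenvalues _ * hs - hp - hd + M 0 1 * hsym - M 0 0 * h11

lemma pd_contDiff {u : E2 → ℝ} (hu : ContDiff ℝ (⊤:ℕ∞) u) (k : Fin 2) :
    ContDiff ℝ (⊤:ℕ∞) (pd k u) :=
  (hu.fderiv_right (le_refl _)).clm_apply contDiff_const

lemma pd_mul {u v : E2 → ℝ} {x : E2} (hu : DifferentiableAt ℝ u x)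
    (hv : DifferentiableAt ℝ v x) (k : Fin 2) :
    pd k (fun y => u y * v y) x = pd k u x * v x + u x * pd k v x := by
  unfold pd
  rw [show (fun y => u y * v y) = u * v from rfl, (hu.hasFDerivAt.mul hv.hasFDerivAt).fderiv]
  simp [ContinuousLinearMap.add_apply, ContinuousLinearMap.smul_apply]
  ring

lemma pd_sq {u : E2 → ℝ} {x : E2} (hu : DifferentiableAt ℝ u x) (k : Fin 2) :
    pd k (fun y => u y ^ 2) x = 2 * u x * pd k u x := by
  have : (fun y => u y ^ 2) = fun y => u y * u y := by ext y; ring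
  rw [this, pd_mul hu hu]; ring

lemma pd_sum2 {u : Fin 2 → Fin 2 → E2 → ℝ} {x : E2}
    (hu : ∀ i j, DifferentiableAt ℝ (u i j) x) (k : Fin 2) :
    pd k (fun y => ∑ i, ∑ j, u i j y) x = ∑ i, ∑ j, pd k (u i j) x := by
  unfold pd
  rw [show (fun y => ∑ i, ∑ j, u i j y) = fun y => ∑ p : Fin 2 × Fin 2, u p.1 p.2 y by
    ext y; simp [Fintype.sum_prod_type]]
  rw [fderiv_fun_sum (fun p _ => hu p.1 p.2)]
  simp [Fintype.sum_prod_type]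

lemma pd_sub {u v : E2 → ℝ} {x : E2} (hu : DifferentiableAt ℝ u x)
    (hv : DifferentiableAt ℝ v x) (k : Fin 2) :
    pd k (fun y => u y - v y) x = pd k u x - pd k v x := by
  unfold pd; rw [fderiv_fun_sub hu hv]; simp

lemma pd_const (c : ℝ) (k : Fin 2) (x : E2) : pd k (fun _ => c) x = 0 := by
  unfold pd; simp

lemma pd_const_mul {u : E2 → ℝ} {x : E2} (hu : DifferentiableAt ℝ u x) (c : ℝ) (k : Fin 2) :
    pd k (fun y => c * u y) x = c * pd k u x := by
  unfold pd; rw [fderiv_const_mul hu]; simp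

lemma pd_coord (m k : Fin 2) (x : E2) :
    pd k (fun y : E2 => y m) x = if m = k then 1 else 0 := by
  unfold pd
  rw [show (fun y : E2 => y m) = (EuclideanSpace.proj m : E2 →L[ℝ] ℝ) from rfl,
    ContinuousLinearMap.fderiv]
  simp [EuclideanSpace.single_apply]

lemma coord_contDiff (m : Fin 2) : ContDiff ℝ (⊤:ℕ∞) (fun y : E2 => y m) :=
  (EuclideanSpace.proj m : E2 →L[ℝ] ℝ).contDiff

-- w y = ∑ m, (y m)^2
lemma pd_w (k : Fin 2) (x : E2) :
    pd k (fun y : E2 => ∑ m, (y m)^2) x = 2 * x k := by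
  have h1 : pd k (fun y : E2 => ∑ m : Fin 2, (y m)^2) x
      = ∑ m : Fin 2, pd k (fun y : E2 => (y m)^2) x := by
    unfold pd
    rw [fderiv_fun_sum (fun m _ => ((coord_contDiff m).differentiable (by simp) x).fun_pow 2)]
    simp
  rw [h1]
  have h2 : ∀ m, pd k (fun y : E2 => (y m)^2) x = 2 * x m * (if m = k then 1 else 0) := by
    intro m
    rw [pd_sq ((coord_contDiff m).differentiable (by simp) x), pd_coord]
  simp only [h2]
  rw [Fin.sum_univ_two]
  fin_cases k <;> simp

lemma one_le_top' : ((⊤:ℕ∞) : WithTop ℕ∞) ≠ 0 := by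
  simp

lemma pd_const_add {u : E2 → ℝ} {x : E2} (hu : DifferentiableAt ℝ u x) (c : ℝ) (k : Fin 2) :
    pd k (fun y => c + u y) x = pd k u x := by
  unfold pd; rw [fderiv_const_add]

lemma w_contDiff : ContDiff ℝ (⊤:ℕ∞) (fun y : E2 => ∑ m, (y m)^2) :=
  ContDiff.sum (fun m _ => (coord_contDiff m).pow 2)

lemma spatial_step {q : Fin 2 → Fin 2 → E2 → ℝ} (hq : ∀ i j, ContDiff ℝ (⊤:ℕ∞) (q i j))
    (c₀ ε : ℝ) (k : Fin 2) (x : E2) :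
    pd2 k k (fun y => (∑ i, ∑ j, q i j y ^ 2) - (c₀ + ε * ∑ m, (y m)^2)) x
      = (∑ i, ∑ j, (2 * (pd k (q i j) x)^2 + 2 * q i j x * pd2 k k (q i j) x)) - 2 * ε := by
  have hdq : ∀ i j y, DifferentiableAt ℝ (q i j) y :=
    fun i j y => ((hq i j).differentiable one_le_top').differentiableAt
  have hdsq : ∀ (i j : Fin 2) (y : E2), DifferentiableAt ℝ (fun z => q i j z ^ 2) y :=
    fun i j y => (hdq i j y).pow 2
  have hdw : ∀ y, DifferentiableAt ℝ (fun z : E2 => ∑ m, (z m)^2) y :=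
    fun y => (w_contDiff.differentiable one_le_top').differentiableAt
  have hdv : ∀ i j y, DifferentiableAt ℝ (pd k (q i j)) y :=
    fun i j y => ((pd_contDiff (hq i j) k).differentiable one_le_top').differentiableAt
  have step1 : (fun y => pd k (fun z => (∑ i, ∑ j, q i j z ^ 2) - (c₀ + ε * ∑ m, (z m)^2)) y)
      = fun y => (∑ i, ∑ j, 2 * q i j y * pd k (q i j) y) - ε * (2 * y k) := by
    funext y
    rw [pd_sub (by exact DifferentiableAt.fun_sum fun i _ => DifferentiableAt.fun_sum fun j _ => hdsq i j y)
      ((differentiableAt_const c₀).fun_add ((differentiableAt_const ε).fun_mul (hdw y))) k]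
    congr 1
    · rw [pd_sum2 (fun i j => hdsq i j y) k]
      exact Finset.sum_congr rfl fun i _ => Finset.sum_congr rfl fun j _ =>
        pd_sq (hdq i j y) k
    · rw [pd_const_add ((differentiableAt_const ε).fun_mul (hdw y)) c₀ k,
        pd_const_mul (hdw y) ε k, pd_w]
  show pd k (fun y => pd k (fun z => (∑ i, ∑ j, q i j z ^ 2) - (c₀ + ε * ∑ m, (z m)^2)) y) x = _
  rw [step1]
  have hdA : ∀ (i j : Fin 2) (y : E2),
      DifferentiableAt ℝ (fun z => 2 * q i j z * pd k (q i j) z) y := by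
    intro i j y
    exact (((differentiableAt_const (2:ℝ)).mul (hdq i j y)).mul (hdv i j y))
  rw [pd_sub (by exact DifferentiableAt.fun_sum fun i _ => DifferentiableAt.fun_sum fun j _ => hdA i j x)
    (((differentiableAt_const ε).fun_mul (((differentiableAt_const (2:ℝ)).fun_mul
      ((coord_contDiff k).differentiable one_le_top' x)))) ) k]
  congr 1
  · rw [pd_sum2 (fun i j => hdA i j x) k]
    refine Finset.sum_congr rfl fun i _ => Finset.sum_congr rfl fun j _ => ?_
    have h1 : (fun z => 2 * q i j z * pd k (q i j) z)
        = fun z => 2 * (q i j z * pd k (q i j) z) := by funext z; ring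
    rw [h1, pd_const_mul ((hdq i j x).fun_mul (hdv i j x)) 2 k, pd_mul (hdq i j x) (hdv i j x) k]
    have h2 : pd k (pd k (q i j)) x = pd2 k k (q i j) x := rfl
    rw [h2]; ring
  · have h1 : (fun y : E2 => ε * (2 * y k)) = fun y : E2 => (ε * 2) * y k := by
      funext y; ring
    rw [h1, pd_const_mul ((coord_contDiff k).differentiable one_le_top' x) (ε*2) k, pd_coord]
    simp
    ring

lemma deriv_nonneg_right_endpoint {φ : ℝ → ℝ} {d t₀ : ℝ} (h0 : 0 < t₀)
    (hφ : HasDerivAt φ d t₀) (hmax : ∀ t ∈ Icc (0:ℝ) t₀, φ t ≤ φ t₀) : 0 ≤ d := by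
  have htend : Tendsto (slope φ t₀) (𝓝[<] t₀) (𝓝 d) :=
    (hasDerivAt_iff_tendsto_slope.1 hφ).mono_left
      (nhdsWithin_mono _ (fun y hy => ne_of_lt hy))
  refine ge_of_tendsto htend ?_
  filter_upwards [Ioo_mem_nhdsLT_of_mem (show t₀ ∈ Ioc 0 t₀ from ⟨h0, le_rfl⟩)] with t ht
  rw [slope_def_field]
  have h1 : φ t - φ t₀ ≤ 0 := sub_nonpos.2 (hmax t ⟨le_of_lt ht.1, le_of_lt ht.2⟩)
  have h2 : t - t₀ < 0 := sub_neg.2 ht.2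
  exact div_nonneg_iff.2 (Or.inr ⟨h1, h2.le⟩)

lemma deriv2_nonpos_of_isLocalMax {g : ℝ → ℝ} (hg : ContDiff ℝ (⊤ : ℕ∞) g)
    (hmax : IsLocalMax g 0) : deriv (deriv g) 0 ≤ 0 := by
  by_contra hcon
  push_neg at hcon
  have hgi : ContDiff ℝ (⊤ : ℕ∞) (deriv g) := (contDiff_infty_iff_deriv.mp hg).2
  have hcont : Continuous (deriv (deriv g)) := hgi.continuous_deriv (by exact_mod_cast le_top)
  have hmem : {s : ℝ | 0 < deriv (deriv g) s} ∈ 𝓝 (0:ℝ) :=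
    (hcont.continuousAt).preimage_mem_nhds (Ioi_mem_nhds hcon)
  obtain ⟨δ, hδpos, hball⟩ := Metric.mem_nhds_iff.mp hmem
  have hball' : Metric.ball (0:ℝ) δ = Ioo (-δ) δ := Real.ball_eq_Ioo 0 δ |>.trans (by norm_num)
  have hmono : StrictMonoOn (deriv g) (Ioo (-δ) δ) := by
    apply strictMonoOn_of_deriv_pos (convex_Ioo _ _) (hgi.continuous.continuousOn)
    intro s hs
    rw [interior_Ioo] at hs
    exact hball (hball' ▸ hs)
  have h0 : deriv g 0 = 0 := hmax.deriv_eq_zero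
  have hgpos : ∀ s ∈ Ioo (0:ℝ) δ, 0 < deriv g s := by
    intro s hs
    have := hmono (show (0:ℝ) ∈ Ioo (-δ) δ by constructor <;> [linarith; exact hδpos])
      (show s ∈ Ioo (-δ) δ by constructor <;> [linarith [hs.1]; exact hs.2]) hs.1
    rwa [h0] at this
  have hmono2 : StrictMonoOn g (Ico 0 δ) := by
    apply strictMonoOn_of_deriv_pos (convex_Ico _ _) (hg.continuous.continuousOn)
    intro s hs
    rw [interior_Ico] at hs
    exact hgpos s hs
  obtain ⟨ε, hεpos, hε⟩ := Metric.eventually_nhds_iff.mp hmax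
  set s := min δ ε / 2 with hs
  have hspos : 0 < s := by positivity
  have hsδ : s < δ := by
    have : min δ ε ≤ δ := min_le_left _ _
    simp only [hs]; linarith
  have hsε : |s - 0| < ε := by
    have : min δ ε ≤ ε := min_le_right _ _
    rw [sub_zero, abs_of_pos hspos]; simp only [hs]; linarith
  have hlt : g 0 < g s := hmono2 ⟨le_rfl, hδpos⟩ ⟨hspos.le, hsδ⟩ hspos
  have hle : g s ≤ g 0 := hε (by simpa [Real.dist_eq] using hsε)
  linarith

lemma trace_sq {M : Matrix (Fin 2) (Fin 2) ℝ} (hs : M 1 0 = M 0 1) :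
    (M * M).trace = ∑ i, ∑ j, (M i j)^2 := by
  rw [Matrix.trace_fin_two]
  simp only [Matrix.mul_apply, Fin.sum_univ_two]
  ring_nf
  rw [hs]; ring

lemma w_eq_norm_sq (x : E2) : ∑ m, (x m)^2 = ‖x‖^2 := by
  rw [EuclideanSpace.norm_eq, Real.sq_sqrt (by positivity)]
  simp [sq_abs]

set_option maxHeartbeats 1000000 in
lemma fbound
    (a c ζ T : ℝ) (hc : 0 < c) (hζ : 0 < ζ) (hT : 0 < T)
    (Q : ℝ → E2 → Matrix (Fin 2) (Fin 2) ℝ)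
    (hsym : ∀ t x, Q t x 1 0 = Q t x 0 1)
    (hsm : ∀ i j : Fin 2,
      ContDiffOn ℝ (⊤:ℕ∞) (fun p : ℝ × E2 => Q p.1 p.2 i j) (Icc 0 T ×ˢ univ))
    (B2 : ℝ) (hB2 : ∀ t ∈ Icc (0:ℝ) T, ∀ x, ∑ i, ∑ j, (Q t x i j)^2 ≤ B2)
    (hsol : ∀ t ∈ Ioo (0:ℝ) T, ∀ (x : E2) (i j : Fin 2),
      deriv (fun s => Q s x i j) t =
        ζ * (∑ k, pd2 k k (fun y => Q t y i j) x)
        - a * Q t x i j - c * (Q t x * Q t x).trace * Q t x i j)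
    (hinit : ∀ x, ∑ i, ∑ j, (Q 0 x i j)^2 ≤ |a| / c) :
    ∀ t ∈ Icc (0:ℝ) T, ∀ x, ∑ i, ∑ j, (Q t x i j)^2 ≤ |a| / c := by
  have hK0 : (0:ℝ) ≤ |a| / c := div_nonneg (abs_nonneg a) hc.le
  have hfnn : ∀ t x, (0:ℝ) ≤ ∑ i, ∑ j, (Q t x i j)^2 := fun t x =>
    Finset.sum_nonneg fun i _ => Finset.sum_nonneg fun j _ => sq_nonneg _
  have hB2nn : (0:ℝ) ≤ B2 := le_trans (hfnn 0 0) (hB2 0 ⟨le_rfl, hT.le⟩ 0)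
  set Cc : ℝ := 4 * ζ + 1 with hCcdef
  -- joint smoothness at interior points, spatial smoothness
  have hq : ∀ t₀ ∈ Ioo (0:ℝ) T, ∀ i j : Fin 2,
      ContDiff ℝ (⊤:ℕ∞) (fun y => Q t₀ y i j) := by
    intro t₀ ht₀ i j
    rw [contDiff_iff_contDiffAt]
    intro y
    have hnhds : Icc 0 T ×ˢ (univ : Set E2) ∈ 𝓝 ((t₀, y) : ℝ × E2) := by
      apply mem_of_superset ((isOpen_Ioo.prod isOpen_univ).mem_nhds (by exact ⟨ht₀, trivial⟩))
      exact prod_mono Ioo_subset_Icc_self (subset_refl _)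
    exact ((hsm i j).contDiffAt hnhds).comp y (contDiffAt_const.prodMk contDiffAt_id)
  have hqt : ∀ t₀ ∈ Ioo (0:ℝ) T, ∀ (x : E2) (i j : Fin 2),
      HasDerivAt (fun s => Q s x i j) (deriv (fun s => Q s x i j) t₀) t₀ := by
    intro t₀ ht₀ x i j
    have hnhds : Icc 0 T ×ˢ (univ : Set E2) ∈ 𝓝 ((t₀, x) : ℝ × E2) := by
      apply mem_of_superset ((isOpen_Ioo.prod isOpen_univ).mem_nhds (by exact ⟨ht₀, trivial⟩))
      exact prod_mono Ioo_subset_Icc_self (subset_refl _)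
    have hdiff : DifferentiableAt ℝ (fun s => Q s x i j) t₀ := by
      have := (((hsm i j).contDiffAt hnhds).differentiableAt one_le_top').comp t₀
        (differentiableAt_id.prodMk (differentiableAt_const x) :
          DifferentiableAt ℝ (fun s : ℝ => ((s, x) : ℝ × E2)) t₀); exact this
    exact hdiff.hasDerivAt
  -- Main claim
  have claim1 : ∀ tstar ∈ Ioo (0:ℝ) T, ∀ ε > (0:ℝ), ∀ t ∈ Icc (0:ℝ) tstar, ∀ x : E2,
      ∑ i, ∑ j, (Q t x i j)^2 ≤ |a| / c + ε + ε * Cc * t + ε * ∑ m, (x m)^2 := by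
    intro tstar htstar ε hε
    by_contra hcon
    push_neg at hcon
    obtain ⟨t₁, ht₁, x₁, hx₁⟩ := hcon
    set h : ℝ × E2 → ℝ := fun p => (∑ i, ∑ j, (Q p.1 p.2 i j)^2)
      - (|a| / c + ε + ε * Cc * p.1 + ε * ∑ m, (p.2 m)^2) with hhdef
    have hh1 : 0 < h (t₁, x₁) := by rw [hhdef]; dsimp only; linarith
    set R : ℝ := max ‖x₁‖ (Real.sqrt (B2 / ε)) + 1 with hRdef
    have hR0 : 0 < R := by
      rw [hRdef]
      have h1 : (0:ℝ) ≤ ‖x₁‖ ⊔ Real.sqrt (B2/ε) := le_trans (norm_nonneg x₁) le_sup_left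
      linarith
    set S : Set (ℝ × E2) := Icc 0 tstar ×ˢ Metric.closedBall 0 R with hSdef
    have hScomp : IsCompact S := isCompact_Icc.prod (isCompact_closedBall _ _)
    have ht₁S : ((t₁, x₁) : ℝ × E2) ∈ S := ⟨ht₁, by
      simp only [Metric.mem_closedBall, dist_zero_right]
      have h9 : ‖x₁‖ ≤ ‖x₁‖ ⊔ Real.sqrt (B2/ε) := le_sup_left
      rw [hRdef]; linarith⟩
    have hSne : S.Nonempty := ⟨(t₁, x₁), ht₁S⟩
    have hSsub : S ⊆ Icc 0 T ×ˢ (univ : Set E2) :=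
      prod_mono (Icc_subset_Icc le_rfl htstar.2.le) (subset_univ _)
    have hhcont : ContinuousOn h S := by
      apply ContinuousOn.sub
      · exact continuousOn_finset_sum _ fun i _ => continuousOn_finset_sum _ fun j _ =>
          (((hsm i j).continuousOn).mono hSsub).pow 2
      · apply Continuous.continuousOn
        have h1 : Continuous (fun p : ℝ × E2 => ∑ m, (p.2 m)^2) :=
          (w_contDiff.continuous).comp continuous_snd
        exact ((continuous_const.add continuous_const).add
          (continuous_const.mul continuous_fst)).add (continuous_const.mul h1)
    obtain ⟨⟨t₀, x₀⟩, hmem, hmax⟩ := hScomp.exists_isMaxOn hSne hhcont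
    have hmax' : ∀ p ∈ S, h p ≤ h (t₀, x₀) := hmax
    have hh0 : 0 < h (t₀, x₀) := lt_of_lt_of_le hh1 (hmax' (t₁, x₁) ht₁S)
    have ht₀mem : t₀ ∈ Icc 0 tstar := hmem.1
    have hx₀mem : ‖x₀‖ ≤ R := by
      have := hmem.2; simpa [Metric.mem_closedBall, dist_zero_right] using this
    -- f value at max point exceeds |a|/c
    have hwnn : ∀ y : E2, (0:ℝ) ≤ ∑ m, (y m)^2 := fun y =>
      Finset.sum_nonneg fun m _ => sq_nonneg _
    have hFgt : |a| / c < ∑ i, ∑ j, (Q t₀ x₀ i j)^2 := by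
      have h1 := hh0
      rw [hhdef] at h1; dsimp only at h1
      have h2 : 0 ≤ ε * Cc * t₀ := by
        apply mul_nonneg (mul_nonneg hε.le (by simp only [hCcdef]; linarith)) ht₀mem.1
      nlinarith [hwnn x₀, hε, mul_nonneg hε.le (hwnn x₀)]
    -- t₀ > 0
    have ht₀pos : 0 < t₀ := by
      rcases eq_or_lt_of_le ht₀mem.1 with heq | hlt
      · exfalso
        have h1 := hh0
        rw [← heq] at h1
        rw [hhdef] at h1; dsimp only at h1
        have := hinit x₀
        nlinarith [hwnn x₀, hε, mul_nonneg hε.le (hwnn x₀)]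
      · exact hlt
    have ht₀T : t₀ ∈ Ioo (0:ℝ) T := ⟨ht₀pos, lt_of_le_of_lt ht₀mem.2 htstar.2⟩
    -- x₀ is interior
    have hx₀lt : ‖x₀‖ < R := by
      by_contra hge
      push_neg at hge
      have hxR : ‖x₀‖ = R := le_antisymm hx₀mem hge
      have h1 := hh0
      rw [hhdef] at h1; dsimp only at h1
      have h2 : ε * ∑ m, (x₀ m)^2 ≥ B2 := by
        rw [w_eq_norm_sq, hxR]
        have hsq : Real.sqrt (B2/ε) ^ 2 = B2/ε := Real.sq_sqrt (div_nonneg hB2nn hε.le)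
        have hR2 : R^2 ≥ B2/ε := by
          have h3 : R ≥ Real.sqrt (B2/ε) := by
            have h9 : Real.sqrt (B2/ε) ≤ ‖x₁‖ ⊔ Real.sqrt (B2/ε) := le_sup_right
            rw [hRdef]; linarith
          nlinarith [Real.sqrt_nonneg (B2/ε)]
        calc ε * R^2 ≥ ε * (B2/ε) := by nlinarith
        _ = B2 := by field_simp
      have h3 := hB2 t₀ ⟨ht₀mem.1, le_trans ht₀mem.2 htstar.2.le⟩ x₀
      nlinarith [mul_nonneg (mul_nonneg hε.le
        (show (0:ℝ) ≤ Cc by simp only [hCcdef]; linarith)) ht₀mem.1, hε]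
    -- spatial smoothness at t₀
    have hq₀ : ∀ i j : Fin 2, ContDiff ℝ (⊤:ℕ∞) (fun y => Q t₀ y i j) := hq t₀ ht₀T
    set ψ : E2 → ℝ := fun y => (∑ i, ∑ j, (Q t₀ y i j)^2)
      - (|a| / c + ε + ε * Cc * t₀ + ε * ∑ m, (y m)^2) with hψdef
    have hψsmooth : ContDiff ℝ (⊤:ℕ∞) ψ := by
      rw [hψdef]
      exact (ContDiff.sum fun i _ => ContDiff.sum fun j _ => (hq₀ i j).pow 2).sub
        (contDiff_const.add (contDiff_const.mul w_contDiff))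
    have hψh : ∀ y : E2, ψ y = h (t₀, y) := by
      intro y; rw [hψdef, hhdef]
    have hkey : ∀ k : Fin 2,
        ∑ i, ∑ j, Q t₀ x₀ i j * pd2 k k (fun y => Q t₀ y i j) x₀ ≤ ε := by
      intro k
      set ek : E2 := EuclideanSpace.single k 1 with hekdef
      have heknorm : ‖ek‖ = 1 := by rw [hekdef, EuclideanSpace.norm_single]; norm_num
      set g : ℝ → ℝ := fun s => ψ (x₀ + s • ek) with hgdef
      have hline : ∀ s : ℝ, HasDerivAt (fun u : ℝ => x₀ + u • ek) ek s := by
        intro s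
        simpa using ((hasDerivAt_id s).smul_const ek).const_add x₀
      have hlinesm : ContDiff ℝ (⊤:ℕ∞) (fun u : ℝ => x₀ + u • ek) :=
        contDiff_const.add (contDiff_id.smul contDiff_const)
      have hg : ContDiff ℝ (⊤:ℕ∞) g := by rw [hgdef]; exact hψsmooth.comp hlinesm
      have hlocmax : IsLocalMax g 0 := by
        refine Metric.eventually_nhds_iff.2 ⟨R - ‖x₀‖, by linarith, ?_⟩
        intro s hs
        have hsabs : |s| < R - ‖x₀‖ := by
          rw [Real.dist_eq, sub_zero] at hs; exact hs
        have hxball : ‖x₀ + s • ek‖ ≤ R := by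
          calc ‖x₀ + s • ek‖ ≤ ‖x₀‖ + ‖s • ek‖ := norm_add_le _ _
          _ = ‖x₀‖ + |s| := by rw [norm_smul, heknorm, Real.norm_eq_abs, mul_one]
          _ ≤ R := by linarith
        have hmemS : ((t₀, x₀ + s • ek) : ℝ × E2) ∈ S := ⟨ht₀mem, by
          simpa [Metric.mem_closedBall, dist_zero_right] using hxball⟩
        have h6 := hmax' _ hmemS
        show g s ≤ g 0
        rw [hgdef]; dsimp only
        rw [hψh, hψh]
        have e0 : x₀ + (0:ℝ) • ek = x₀ := by simp
        rw [e0]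
        exact h6
      have hd2g := deriv2_nonpos_of_isLocalMax hg hlocmax
      have hψdiff : ∀ y, DifferentiableAt ℝ ψ y := fun y =>
        (hψsmooth.differentiable one_le_top').differentiableAt
      have hpdψ : ContDiff ℝ (⊤:ℕ∞) (pd k ψ) := pd_contDiff hψsmooth k
      have hdg : deriv g = fun s => pd k ψ (x₀ + s • ek) := by
        funext s
        rw [hgdef]
        exact (((hψdiff (x₀ + s • ek)).hasFDerivAt).comp_hasDerivAt s (hline s)).deriv
      have hd2eq : deriv (deriv g) 0 = pd2 k k ψ x₀ := by
        rw [hdg]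
        have h2 : HasDerivAt (fun s : ℝ => pd k ψ (x₀ + s • ek))
            ((fderiv ℝ (pd k ψ) (x₀ + (0:ℝ) • ek)) ek) 0 :=
          (((hpdψ.differentiable one_le_top') _).hasFDerivAt).comp_hasDerivAt 0 (hline 0)
        rw [h2.deriv]
        have e0 : x₀ + (0:ℝ) • ek = x₀ := by simp
        rw [e0, hekdef]
        rfl
      have hineq : pd2 k k ψ x₀ ≤ 0 := hd2eq ▸ hd2g
      have hstep := spatial_step (q := fun i j y => Q t₀ y i j) (fun i j => hq₀ i j)
        (|a| / c + ε + ε * Cc * t₀) ε k x₀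
      beta_reduce at hstep
      rw [← hψdef] at hstep
      rw [hstep] at hineq
      simp only [Fin.sum_univ_two] at hineq ⊢
      linarith [sq_nonneg (pd k (fun y => Q t₀ y 0 0) x₀),
        sq_nonneg (pd k (fun y => Q t₀ y 0 1) x₀),
        sq_nonneg (pd k (fun y => Q t₀ y 1 0) x₀),
        sq_nonneg (pd k (fun y => Q t₀ y 1 1) x₀)]
    -- time direction
    set φ : ℝ → ℝ := fun s => (∑ i, ∑ j, (Q s x₀ i j)^2)
      - (|a| / c + ε + ε * Cc * s + ε * ∑ m, (x₀ m)^2) with hφdef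
    have hφd : HasDerivAt φ
        ((∑ i, ∑ j, 2 * Q t₀ x₀ i j * deriv (fun s => Q s x₀ i j) t₀) - ε * Cc) t₀ := by
      rw [hφdef]
      have h1 : HasDerivAt (fun s => ∑ i, ∑ j, (Q s x₀ i j)^2)
          (∑ i, ∑ j, 2 * Q t₀ x₀ i j * deriv (fun s => Q s x₀ i j) t₀) t₀ := by
        have h0 := HasDerivAt.fun_sum (fun i (_ : i ∈ (Finset.univ : Finset (Fin 2))) =>
          HasDerivAt.fun_sum (fun j (_ : j ∈ (Finset.univ : Finset (Fin 2))) =>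
            (hqt t₀ ht₀T x₀ i j).fun_pow 2))
        convert h0 using 1
        · rfl
        · rfl
        refine Finset.sum_congr rfl fun i _ => Finset.sum_congr rfl fun j _ => ?_
        push_cast
        ring
      have h2 : HasDerivAt (fun s => |a| / c + ε + ε * Cc * s + ε * ∑ m, (x₀ m)^2)
          (ε * Cc) t₀ := by
        have h3 : HasDerivAt (fun s : ℝ => ε * Cc * s) (ε * Cc) t₀ := by
          simpa using (hasDerivAt_id t₀).const_mul (ε * Cc)
        simpa using (h3.const_add (|a| / c + ε)).add_const (ε * ∑ m, (x₀ m)^2)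
      exact h1.sub h2
    have hφmax : ∀ t ∈ Icc (0:ℝ) t₀, φ t ≤ φ t₀ := by
      intro t ht
      have hmemS : ((t, x₀) : ℝ × E2) ∈ S := ⟨⟨ht.1, le_trans ht.2 ht₀mem.2⟩, by
        simpa [Metric.mem_closedBall, dist_zero_right] using hx₀mem⟩
      have h6 := hmax' _ hmemS
      rw [hφdef]; dsimp only
      rw [hhdef] at h6; dsimp only at h6
      exact h6
    have hdnn := deriv_nonneg_right_endpoint ht₀pos hφd hφmax
    -- final contradiction
    have htraceEq : (Q t₀ x₀ * Q t₀ x₀).trace = ∑ i, ∑ j, (Q t₀ x₀ i j)^2 :=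
      trace_sq (hsym t₀ x₀)
    have hterm : ∀ i j : Fin 2, 2 * Q t₀ x₀ i j * deriv (fun s => Q s x₀ i j) t₀
        = 2*ζ*(Q t₀ x₀ i j * (∑ k, pd2 k k (fun y => Q t₀ y i j) x₀))
          - 2*a*((Q t₀ x₀ i j)^2)
          - 2*c*(∑ i', ∑ j', (Q t₀ x₀ i' j')^2)*((Q t₀ x₀ i j)^2) := by
      intro i j
      rw [hsol t₀ ht₀T x₀ i j, htraceEq]; ring
    have hFnn : (0:ℝ) ≤ ∑ i, ∑ j, (Q t₀ x₀ i j)^2 := hfnn t₀ x₀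
    have hacF : (0:ℝ) ≤ a + c * ∑ i, ∑ j, (Q t₀ x₀ i j)^2 := by
      have h7 : c * (|a| / c) = |a| := by field_simp
      nlinarith [abs_nonneg a, neg_abs_le a, hFgt, hc]
    have hprod : (0:ℝ) ≤ (∑ i, ∑ j, (Q t₀ x₀ i j)^2)
        * (a + c * ∑ i, ∑ j, (Q t₀ x₀ i j)^2) := mul_nonneg hFnn hacF
    have hS2 : ∑ i, ∑ j, Q t₀ x₀ i j * (∑ k, pd2 k k (fun y => Q t₀ y i j) x₀) ≤ 2 * ε := by
      have hk0 := hkey 0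
      have hk1 := hkey 1
      simp only [Fin.sum_univ_two] at hk0 hk1 ⊢
      linarith
    have hζS2 : ζ * (∑ i, ∑ j, Q t₀ x₀ i j * (∑ k, pd2 k k (fun y => Q t₀ y i j) x₀))
        ≤ ζ * (2 * ε) := mul_le_mul_of_nonneg_left hS2 hζ.le
    have hεCc : ε * Cc = 4 * (ε * ζ) + ε := by rw [hCcdef]; ring
    rw [show (∑ i, ∑ j, 2 * Q t₀ x₀ i j * deriv (fun s => Q s x₀ i j) t₀)
      = ∑ i, ∑ j, (2*ζ*(Q t₀ x₀ i j * (∑ k, pd2 k k (fun y => Q t₀ y i j) x₀))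
          - 2*a*((Q t₀ x₀ i j)^2)
          - 2*c*(∑ i', ∑ j', (Q t₀ x₀ i' j')^2)*((Q t₀ x₀ i j)^2)) from
      Finset.sum_congr rfl fun i _ => Finset.sum_congr rfl fun j _ => hterm i j] at hdnn
    simp only [Fin.sum_univ_two] at hdnn hζS2 hprod
    linarith [hdnn, hζS2, hprod, hεCc, hε]

    -- from claim1 to the bound on [0,T)
  have step2 : ∀ t ∈ Ico (0:ℝ) T, ∀ x : E2, ∑ i, ∑ j, (Q t x i j)^2 ≤ |a| / c := by
    intro t ht x
    by_contra hgt
    push_neg at hgt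
    have hA : (0:ℝ) < 1 + Cc * t + ∑ m, (x m)^2 := by
      have h1 : 0 ≤ Cc * t := mul_nonneg (by rw [hCcdef]; linarith) ht.1
      have h2 : 0 ≤ ∑ m, (x m)^2 := Finset.sum_nonneg fun m _ => sq_nonneg _
      linarith
    set A : ℝ := 1 + Cc * t + ∑ m, (x m)^2 with hAdef
    set ε : ℝ := ((∑ i, ∑ j, (Q t x i j)^2) - |a| / c) / (2 * A) with hεdef
    have hεpos : 0 < ε := by
      rw [hεdef]
      apply div_pos (by linarith) (by linarith)
    have h5 := claim1 ((t + T)/2) ⟨by linarith [ht.1], by linarith [ht.2]⟩ ε hεpos t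
      ⟨ht.1, by linarith [ht.2]⟩ x
    have h6 : ε + ε * Cc * t + ε * ∑ m, (x m)^2 = ε * A := by rw [hAdef]; ring
    have h7 : ε * A = ((∑ i, ∑ j, (Q t x i j)^2) - |a| / c) / 2 := by
      rw [hεdef]
      field_simp
    have h8 := h6.trans h7
    nlinarith [h5, h8, hgt]
  -- conclude, including t = T by continuity
  intro t ht x
  rcases lt_or_eq_of_le ht.2 with hlt | heq
  · exact step2 t ⟨ht.1, hlt⟩ x
  · subst heq
    have hcont : ContinuousOn (fun s => ∑ i, ∑ j, (Q s x i j)^2) (Icc 0 t) := by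
      apply continuousOn_finset_sum _ fun i _ => continuousOn_finset_sum _ fun j _ => ?_
      exact (((hsm i j).continuousOn).comp
        (Continuous.continuousOn (continuous_id.prodMk continuous_const))
        (fun s hs => ⟨hs, trivial⟩)).pow 2
    have hne : (𝓝[Ico (0:ℝ) t] t).NeBot := by
      apply mem_closure_iff_nhdsWithin_neBot.1
      rw [closure_Ico hT.ne]
      exact ⟨hT.le, le_rfl⟩
    haveI := hne
    have htd : Tendsto (fun s => ∑ i, ∑ j, (Q s x i j)^2) (𝓝[Ico (0:ℝ) t] t)
        (𝓝 (∑ i, ∑ j, (Q t x i j)^2)) :=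
      (hcont t ⟨hT.le, le_rfl⟩).mono_left (nhdsWithin_mono _ Ico_subset_Icc_self)
    refine le_of_tendsto htd ?_
    filter_upwards [eventually_mem_nhdsWithin] with s hs
    exact step2 s hs x

/-- physicality preservation, 2D case of Proposition 1.4:
for the flow `∂_t Q = ζΔQ − aQ − c tr(Q²) Q` on `ℝ²` with values in `S^(2)`,
if the eigenvalues of the initial data lie in `[−√(|a|/(2c)), √(|a|/(2c))]`
everywhere, they remain in this interval for all `t ∈ [0,T]`. -/
theorem physicality_preservation_2d
    (a c ζ T : ℝ) (hc : 0 < c) (hζ : 0 < ζ) (hT : 0 < T)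
    (Q : ℝ → E2 → Matrix (Fin 2) (Fin 2) ℝ)
    -- values in S^(2): symmetric (Hermitian, real) and traceless
    (hherm : ∀ t x, (Q t x).IsHermitian)
    (htr : ∀ t x, (Q t x).trace = 0)
    -- smooth on [0,T] × ℝ²
    (hsmooth : ∀ i j : Fin 2,
      ContDiffOn ℝ (⊤ : ℕ∞) (fun p : ℝ × E2 => Q p.1 p.2 i j) (Icc 0 T ×ˢ univ))
    -- bounded, with bounded first and second spatial derivatives
    (hbdd : ∃ B : ℝ, ∀ t ∈ Icc (0:ℝ) T, ∀ x : E2,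
      fnorm (Q t x) ≤ B ∧
      (∀ i j k, |pd k (fun y => Q t y i j) x| ≤ B) ∧
      (∀ i j k l, |pd2 l k (fun y => Q t y i j) x| ≤ B))
    -- square-integrable, uniformly in t
    (hL2 : ∃ B : ℝ, ∀ t ∈ Icc (0:ℝ) T,
      Integrable (fun x : E2 => ∑ i, ∑ j, (Q t x i j) ^ 2) ∧
      (∫ x : E2, ∑ i, ∑ j, (Q t x i j) ^ 2) ≤ B)
    -- Q solves ∂_t Q = ζ ΔQ − aQ − c tr(Q²) Q
    (hsol : ∀ t ∈ Ioo (0:ℝ) T, ∀ (x : E2) (i j : Fin 2),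
      deriv (fun s => Q s x i j) t =
        ζ * (∑ k, pd2 k k (fun y => Q t y i j) x)
        - a * Q t x i j - c * (Q t x * Q t x).trace * Q t x i j)
    -- initial eigenvalue constraint
    (hinit : ∀ (x : E2) (i : Fin 2),
      (hherm 0 x).eigenvalues i ∈
        Icc (-Real.sqrt (|a| / (2 * c))) (Real.sqrt (|a| / (2 * c)))) :
    ∀ t ∈ Icc (0:ℝ) T, ∀ (x : E2) (i : Fin 2),
      (hherm t x).eigenvalues i ∈
        Icc (-Real.sqrt (|a| / (2 * c))) (Real.sqrt (|a| / (2 * c))) := by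
  obtain ⟨B, hB⟩ := hbdd
  have hsm : ∀ i j : Fin 2, ContDiffOn ℝ (⊤:ℕ∞)
      (fun p : ℝ × E2 => Q p.1 p.2 i j) (Icc 0 T ×ˢ univ) :=
    fun i j => (hsmooth i j).of_le (by simp)
  have hsym : ∀ t x, Q t x 1 0 = Q t x 0 1 := by
    intro t x
    have := (hherm t x).apply 0 1
    simpa using this
  have hfnn : ∀ t x, (0:ℝ) ≤ ∑ i, ∑ j, (Q t x i j)^2 := fun t x =>
    Finset.sum_nonneg fun i _ => Finset.sum_nonneg fun j _ => sq_nonneg _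
  have hB2 : ∀ t ∈ Icc (0:ℝ) T, ∀ x, ∑ i, ∑ j, (Q t x i j)^2 ≤ B^2 := by
    intro t ht x
    have h1 : Real.sqrt (∑ i, ∑ j, (Q t x i j)^2) ≤ B := (hB t ht x).1
    have h2 := Real.sqrt_nonneg (∑ i, ∑ j, (Q t x i j)^2)
    have h3 : Real.sqrt (∑ i, ∑ j, (Q t x i j)^2) ^ 2 = ∑ i, ∑ j, (Q t x i j)^2 :=
      Real.sq_sqrt (hfnn t x)
    nlinarith [h1, h2, h3]
  have hvnn : (0:ℝ) ≤ |a| / (2*c) := div_nonneg (abs_nonneg a) (by linarith)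
  have h2v : 2 * (|a|/(2*c)) = |a|/c := by field_simp
  have hinit' : ∀ x, ∑ i, ∑ j, (Q 0 x i j)^2 ≤ |a| / c := by
    intro x
    have hmem := hinit x 0
    have he := eig_sq_eq (hherm 0 x) (htr 0 x) 0
    have hsq : Real.sqrt (|a|/(2*c)) ^ 2 = |a|/(2*c) := Real.sq_sqrt hvnn
    have h2 : (hherm 0 x).eigenvalues 0 ^ 2 ≤ Real.sqrt (|a|/(2*c)) ^ 2 :=
      sq_le_sq' hmem.1 hmem.2
    linarith
  have key := fbound a c ζ T hc hζ hT Q hsym hsm (B^2) hB2 hsol hinit'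
  intro t ht x i
  have hfK := key t ht x
  have he := eig_sq_eq (hherm t x) (htr t x) i
  have h1 : (hherm t x).eigenvalues i ^ 2 ≤ |a|/(2*c) := by linarith
  have h2 : |(hherm t x).eigenvalues i| ≤ Real.sqrt (|a|/(2*c)) := by
    rw [← Real.sqrt_sq_eq_abs]
    exact Real.sqrt_le_sqrt h1
  have h3 := abs_le.1 h2
  exact ⟨h3.1, h3.2⟩

end
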